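/- (Theorem 4.1(3), Construction A: unimodularity.) Let C ⊆ 𝔽₂^n be a binary linear code, let ρ : ℤ^n → 𝔽₂^n be componentwise reduction modulo 2, and let Γ_C = (1/√2) · ρ^{-1}(C) ⊆ ℝ^n. Then C is self-dual (C = C^⊥) if and only if Γ_C is unimodular, i.e., Γ_C equals its dual lattice Γ_C^* = {x ∈ ℝ^n : ⟨x, v⟩ ∈ ℤ for all v ∈ Γ_C}. -/

import Mathlib

/-- Componentwise reduction modulo 2, ρ : ℤ^n → 𝔽₂^n. -/
def rhoMod2 (n : ℕ) (v : Fin n → ℤ) : Fin n → ZMod 2 := fun i => (v i : ZMod 2)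

/-- The Construction A lattice Γ_C = (1/√2) ρ⁻¹(C) ⊆ ℝ^n associated to a binary
linear code C ⊆ 𝔽₂^n. -/
def GammaA (n : ℕ) (C : Submodule (ZMod 2) (Fin n → ZMod 2)) : Set (Fin n → ℝ) :=
  {x | ∃ v : Fin n → ℤ, rhoMod2 n v ∈ C ∧ ∀ i, x i = (v i : ℝ) / Real.sqrt 2}

/-!
The pairing of two points `a / √2`, `b / √2` of `(1/√2) ℤ^n` is `(a ⬝ b) / 2`, which is an integer
exactly when `ρ a ⬝ ρ b = 0` in `𝔽₂`. Hence the part of `Γ_C^*` inside `(1/√2) ℤ^n` is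
`(1/√2) ρ⁻¹(C^⊥)`, and all of `Γ_C^*` lies there because `√2 eⱼ = (1/√2)(2 eⱼ) ∈ Γ_C`.
So `Γ_C^* = (1/√2) ρ⁻¹(C^⊥)`, and `Γ_C = Γ_C^*` iff `C = C^⊥` since `v ↦ v / √2` is injective
and `ρ` is surjective.
-/

open Matrix

noncomputable def scaledEmbedding {ι : Type*} (v : ι → ℤ) : ι → ℝ :=
  fun i => (v i : ℝ) / Real.sqrt 2

theorem scaledEmbedding_injective {ι : Type*} :
    Function.Injective (scaledEmbedding (ι := ι)) := by
  intro a b h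
  funext i
  have hi := congrFun h i
  rw [scaledEmbedding, scaledEmbedding, div_left_inj' (by positivity)] at hi
  exact_mod_cast hi

section Pairing

variable {ι : Type*} [Fintype ι]

def dualLattice (Λ : Set (ι → ℝ)) : Set (ι → ℝ) :=
  {x | ∀ v ∈ Λ, ∃ m : ℤ, x ⬝ᵥ v = m}

def dualCode (C : Submodule (ZMod 2) (ι → ZMod 2)) : Set (ι → ZMod 2) :=
  {u | ∀ c ∈ C, u ⬝ᵥ c = 0}

theorem scaledEmbedding_dotProduct (a b : ι → ℤ) :
    scaledEmbedding a ⬝ᵥ scaledEmbedding b = ((a ⬝ᵥ b : ℤ) : ℝ) / 2 := by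
  simp only [dotProduct, scaledEmbedding, Int.cast_sum, Int.cast_mul, Finset.sum_div]
  refine Finset.sum_congr rfl fun i _ => ?_
  rw [div_mul_div_comm, Real.mul_self_sqrt zero_le_two]

end Pairing

theorem exists_intCast_eq_intCast_div_two_iff (k : ℤ) :
    (∃ m : ℤ, (k : ℝ) / 2 = m) ↔ (k : ZMod 2) = 0 := by
  rw [ZMod.intCast_zmod_eq_zero_iff_dvd]
  constructor
  · rintro ⟨m, hm⟩
    rw [div_eq_iff two_ne_zero] at hm
    exact ⟨m, by rw [mul_comm]; exact_mod_cast hm⟩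
  · rintro ⟨m, rfl⟩
    exact ⟨m, by push_cast; ring⟩

section ConstructionA

variable (n : ℕ) (C : Submodule (ZMod 2) (Fin n → ZMod 2))

theorem rhoMod2_surjective : Function.Surjective (rhoMod2 n) :=
  fun c => ⟨fun i => (c i).val, funext fun i => by simp [rhoMod2]⟩

theorem rhoMod2_dotProduct (a b : Fin n → ℤ) :
    rhoMod2 n a ⬝ᵥ rhoMod2 n b = ((a ⬝ᵥ b : ℤ) : ZMod 2) :=
  ((Int.castRingHom (ZMod 2)).map_dotProduct a b).symm

theorem exists_scaledEmbedding_dotProduct_eq_intCast_iff (a b : Fin n → ℤ) :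
    (∃ m : ℤ, scaledEmbedding a ⬝ᵥ scaledEmbedding b = m) ↔ rhoMod2 n a ⬝ᵥ rhoMod2 n b = 0 := by
  rw [scaledEmbedding_dotProduct, rhoMod2_dotProduct, exists_intCast_eq_intCast_div_two_iff]

theorem gammaA_eq_image : GammaA n C = scaledEmbedding '' (rhoMod2 n ⁻¹' C) := by
  ext x
  constructor
  · rintro ⟨v, hv, hx⟩
    exact ⟨v, hv, (funext hx).symm⟩
  · rintro ⟨v, hv, rfl⟩
    exact ⟨v, hv, fun i => rfl⟩

theorem mem_range_scaledEmbedding_of_mem_dualLattice {x : Fin n → ℝ}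
    (hx : x ∈ dualLattice (GammaA n C)) : x ∈ Set.range scaledEmbedding := by
  have hcoord (j : Fin n) : ∃ m : ℤ, x j = m / Real.sqrt 2 := by
    have hsingle : scaledEmbedding (Pi.single j 2) = Pi.single j (Real.sqrt 2) := by
      funext i
      rcases eq_or_ne i j with rfl | hij
      · simp [scaledEmbedding]
      · simp [scaledEmbedding, hij]
    have hmem : scaledEmbedding (Pi.single j 2) ∈ GammaA n C := by
      rw [gammaA_eq_image]
      refine ⟨Pi.single j 2, ?_, rfl⟩
      have hzero : rhoMod2 n (Pi.single j 2) = 0 := by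
        funext i
        rcases eq_or_ne i j with rfl | hij
        · simp only [rhoMod2, Pi.single_eq_same, Int.cast_ofNat, Pi.zero_apply]
          decide
        · simp [rhoMod2, hij]
      simp [hzero]
    obtain ⟨m, hm⟩ := hx _ hmem
    rw [hsingle, dotProduct_single] at hm
    exact ⟨m, by rw [← hm, mul_div_cancel_right₀ _ (by positivity)]⟩
  choose a ha using hcoord
  exact ⟨a, funext fun j => (ha j).symm⟩

theorem dualLattice_gammaA :
    dualLattice (GammaA n C) = scaledEmbedding '' (rhoMod2 n ⁻¹' dualCode C) := by
  ext x
  constructor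
  · intro hx
    obtain ⟨a, rfl⟩ := mem_range_scaledEmbedding_of_mem_dualLattice n C hx
    refine ⟨a, fun c hc => ?_, rfl⟩
    obtain ⟨b, rfl⟩ := rhoMod2_surjective n c
    have hb : scaledEmbedding b ∈ GammaA n C := by
      rw [gammaA_eq_image]
      exact ⟨b, hc, rfl⟩
    exact (exists_scaledEmbedding_dotProduct_eq_intCast_iff n a b).1 (hx _ hb)
  · rintro ⟨a, ha, rfl⟩ v hv
    rw [gammaA_eq_image] at hv
    obtain ⟨b, hb, rfl⟩ := hv
    exact (exists_scaledEmbedding_dotProduct_eq_intCast_iff n a b).2 (ha _ hb)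

end ConstructionA

/-- Theorem 4.1(3), Construction A (unimodularity): C is self-dual (C = C^⊥) if and
only if Γ_C is unimodular, i.e., Γ_C equals its dual lattice
Γ_C^* = {x ∈ ℝ^n : ⟨x, v⟩ ∈ ℤ for all v ∈ Γ_C}. -/
theorem constructionA_unimodular_iff (n : ℕ) (C : Submodule (ZMod 2) (Fin n → ZMod 2)) :
    (∀ u : Fin n → ZMod 2, u ∈ C ↔ ∀ c ∈ C, ∑ i, u i * c i = 0) ↔
    GammaA n C = {x : Fin n → ℝ | ∀ v ∈ GammaA n C, ∃ m : ℤ, ∑ i, x i * v i = (m : ℝ)} := by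
  change (∀ u, u ∈ (C : Set (Fin n → ZMod 2)) ↔ u ∈ dualCode C) ↔
    GammaA n C = dualLattice (GammaA n C)
  rw [dualLattice_gammaA, gammaA_eq_image, scaledEmbedding_injective.image_injective.eq_iff,
    (rhoMod2_surjective n).preimage_injective.eq_iff, Set.ext_iff]
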